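/- arXiv:1506.06743 — 4 statements merged into one kernel-verified Lean document; each statement's English description precedes it below -/
import Mathlib

section
/- (Generalized Alon-Friedland-Kalai Lemma, inequality part) Let R be a discrete valuation ring with maximal ideal p = (π) and finite residue field of cardinality q. Let v ≥ 1, let S(v) be a set of coset representatives for p^v in R, and let T ⊂ R be a nonempty finite set no two distinct elements of which are congruent modulo p; let T̄ be the image of T in S(v) (i.e., the set of representatives in S(v) of elements of T modulo p^v). For x ∈ R, define P(x,v,T) = Π_{y ∈ S(v) \ T̄} (x - y) and c(v) = Σ_{i=1}^{v-1} (q^i - 1). Then ord_p P(x,v,T) ≥ c(v). -/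
/-!
Since `ord_p (∏ (x - y)) = ∑_y ord_p (x - y) = ∑_{j ≥ 1} #{y | x ≡ y mod p^j}`, it suffices to
count, for each `1 ≤ j < v`, the `y ∈ S \ T̄` congruent to `x` modulo `p^j`. Among the
representatives `S` there are exactly `[p^j : p^v] = q^(v-j)` of them, and at most one lies in
`T̄`, because distinct elements of `T̄` lie in distinct classes modulo `p`. Summing
`q^(v-j) - 1` over `j` gives `c(v)`.
-/

open IsLocalRing Finset

section Representatives

variable {G : Type*} [AddCommGroup G] {H K : AddSubgroup G} {S : Finset G}

theorem card_filter_sub_mem_eq_relIndex [DecidablePred (· ∈ K)] (hHK : H ≤ K)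
    (hS : ∀ x, ∃! s, s ∈ S ∧ x - s ∈ H) (x : G) :
    #{y ∈ S | x - y ∈ K} = H.relIndex K := by
  let f : {y // y ∈ ({y ∈ S | x - y ∈ K} : Finset G)} → K ⧸ H.addSubgroupOf K :=
    fun y => QuotientAddGroup.mk ⟨x - y, (mem_filter.mp y.2).2⟩
  have hf : Function.Bijective f := by
    constructor
    · rintro ⟨y, hy⟩ ⟨y', hy'⟩ h
      rw [QuotientAddGroup.eq, AddSubgroup.mem_addSubgroupOf] at h
      push_cast at h
      rw [show -(x - y) + (x - y') = y - y' by abel] at h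
      exact Subtype.ext <| (hS y).unique ⟨(mem_filter.mp hy).1, by simp⟩
        ⟨(mem_filter.mp hy').1, h⟩
    · intro c
      induction c using QuotientAddGroup.induction_on with | H k
      obtain ⟨y, ⟨hyS, hy⟩, -⟩ := hS (x - k)
      have hxy : x - y ∈ K := by
        rw [show x - y = k + (x - k - y) by abel]
        exact add_mem k.2 (hHK hy)
      refine ⟨⟨y, mem_filter.mpr ⟨hyS, hxy⟩⟩, ?_⟩
      rw [QuotientAddGroup.eq, AddSubgroup.mem_addSubgroupOf]
      push_cast
      rw [show -(x - y) + k = -(x - k - y) by abel]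
      exact neg_mem hy
  rw [← Nat.card_eq_finsetCard, Nat.card_eq_of_bijective f hf]
  rfl

theorem card_filter_sub_mem_le_one [DecidablePred (· ∈ K)] (hHK : H ≤ K)
    (hS : ∀ x, ∃! s, s ∈ S ∧ x - s ∈ H) {T Tbar : Finset G}
    (hT : ∀ t ∈ T, ∀ t' ∈ T, t ≠ t' → t - t' ∉ K)
    (hTbar : ∀ s ∈ Tbar, s ∈ S ∧ ∃ t ∈ T, t - s ∈ H) (x : G) :
    #{y ∈ Tbar | x - y ∈ K} ≤ 1 := by
  refine card_le_one.mpr fun y hy y' hy' => ?_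
  obtain ⟨hyT, hxy⟩ := mem_filter.mp hy
  obtain ⟨hyT', hxy'⟩ := mem_filter.mp hy'
  obtain ⟨hyS, t, ht, hty⟩ := hTbar y hyT
  obtain ⟨hyS', t', ht', hty'⟩ := hTbar y' hyT'
  have htt' : t = t' := by
    by_contra hne
    refine hT t ht t' ht' hne ?_
    have : t - t' = (t - y) - (t' - y') + ((x - y') - (x - y)) := by abel
    rw [this]
    exact add_mem (sub_mem (hHK hty) (hHK hty')) (sub_mem hxy' hxy)
  subst htt'
  exact (hS t).unique ⟨hyS, hty⟩ ⟨hyS', hty'⟩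

theorem relIndex_sub_one_le_card_filter_sdiff [DecidableEq G] [DecidablePred (· ∈ K)]
    (hHK : H ≤ K) (hS : ∀ x, ∃! s, s ∈ S ∧ x - s ∈ H) {T Tbar : Finset G}
    (hT : ∀ t ∈ T, ∀ t' ∈ T, t ≠ t' → t - t' ∉ K)
    (hTbar : ∀ s ∈ Tbar, s ∈ S ∧ ∃ t ∈ T, t - s ∈ H) (x : G) :
    H.relIndex K - 1 ≤ #{y ∈ S \ Tbar | x - y ∈ K} := by
  have hSK := card_filter_sub_mem_eq_relIndex hHK hS x
  have hTK := card_filter_sub_mem_le_one hHK hS hT hTbar x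
  calc H.relIndex K - 1 ≤ #{y ∈ S | x - y ∈ K} - #{y ∈ Tbar | x - y ∈ K} := by omega
    _ ≤ #({y ∈ S | x - y ∈ K} \ {y ∈ Tbar | x - y ∈ K}) := le_card_sdiff _ _
    _ ≤ #{y ∈ S \ Tbar | x - y ∈ K} :=
        card_le_card fun y => by simp only [mem_sdiff, mem_filter]; tauto

end Representatives

theorem Ideal.mem_pow_card_filter_mem_pow {R : Type*} [CommSemiring R] (I : Ideal R) (a : R)
    {s : Finset ℕ} (hs : 0 ∉ s) [DecidablePred (a ∈ I ^ ·)] :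
    a ∈ I ^ #{j ∈ s | a ∈ I ^ j} := by
  by_contra h
  set k := #{j ∈ s | a ∈ I ^ j}
  have hk : k ≠ 0 := by
    intro hk
    rw [hk, pow_zero, Ideal.one_eq_top] at h
    exact h Submodule.mem_top
  have hsub : {j ∈ s | a ∈ I ^ j} ⊆ Ico 1 k := fun j hj => by
    obtain ⟨hjs, hj⟩ := mem_filter.mp hj
    refine mem_Ico.mpr ⟨Nat.pos_of_ne_zero (ne_of_mem_of_not_mem hjs hs), ?_⟩
    by_contra hkj
    exact h (Ideal.pow_le_pow_right (not_lt.mp hkj) hj)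
  have := card_le_card hsub
  simp only [Nat.card_Ico] at this
  omega

theorem Ideal.prod_mem_pow_sum_card_filter {R ι : Type*} [CommSemiring R] (I : Ideal R)
    (A : Finset ι) (f : ι → R) {s : Finset ℕ} (hs : 0 ∉ s) [∀ y j, Decidable (f y ∈ I ^ j)] :
    ∏ y ∈ A, f y ∈ I ^ ∑ j ∈ s, #{y ∈ A | f y ∈ I ^ j} := by
  have := sum_card_bipartiteAbove_eq_sum_card_bipartiteBelow (s := A) (t := s)
    (fun y j => f y ∈ I ^ j)
  simp only [bipartiteAbove, bipartiteBelow] at this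
  rw [← this, ← prod_pow_eq_pow_sum]
  exact Ideal.prod_mem_prod fun y _ => I.mem_pow_card_filter_mem_pow (f y) hs

section DiscreteValuationRing

variable {R : Type*} [CommRing R] [IsDomain R] [IsDiscreteValuationRing R]

theorem index_maximalIdeal_pow (n : ℕ) :
    (maximalIdeal R ^ n).toAddSubgroup.index = Nat.card (ResidueField R) ^ n :=
  cardQuot_pow_of_prime (IsDiscreteValuationRing.not_a_field R)

theorem relIndex_maximalIdeal_pow [Finite (ResidueField R)] {j n : ℕ} (h : j ≤ n) :
    (maximalIdeal R ^ n).toAddSubgroup.relIndex (maximalIdeal R ^ j).toAddSubgroup =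
      Nat.card (ResidueField R) ^ (n - j) := by
  have := AddSubgroup.relIndex_mul_index
    (Submodule.toAddSubgroup_mono (Ideal.pow_le_pow_right (I := maximalIdeal R) h))
  rw [index_maximalIdeal_pow, index_maximalIdeal_pow, ← pow_sub_mul_pow (Nat.card _) h] at this
  exact mul_right_cancel₀ (pow_ne_zero _ Nat.card_pos.ne') this

end DiscreteValuationRing

theorem stmt6_general (R : Type*) [CommRing R] [IsDomain R] [IsDiscreteValuationRing R]
    [DecidableEq R] [Fintype (ResidueField R)] (q : ℕ) (hq : q = Fintype.card (ResidueField R))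
    (v : ℕ)
    (S : Finset R)
    (hS : ∀ x : R, ∃! s : R, s ∈ S ∧ x - s ∈ (maximalIdeal R) ^ v)
    (T : Finset R)
    (hTF : ∀ x ∈ T, ∀ y ∈ T, x ≠ y → x - y ∉ maximalIdeal R)
    (Tbar : Finset R)
    (hTbar : ∀ s : R, s ∈ Tbar ↔ s ∈ S ∧ ∃ t ∈ T, t - s ∈ (maximalIdeal R) ^ v)
    (x : R) :
    (∏ y ∈ S \ Tbar, (x - y)) ∈
      (maximalIdeal R) ^ (∑ i ∈ Finset.Ico 1 v, (q ^ i - 1)) := by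
  classical
  set p := maximalIdeal R
  have hcount : ∀ j ∈ Ico 1 v, q ^ (v - j) - 1 ≤ #{y ∈ S \ Tbar | x - y ∈ p ^ j} := by
    intro j hj
    obtain ⟨hj1, hjv⟩ := mem_Ico.mp hj
    have := relIndex_sub_one_le_card_filter_sdiff
      (Submodule.toAddSubgroup_mono (Ideal.pow_le_pow_right hjv.le)) hS
      (fun t ht t' ht' hne h => hTF t ht t' ht' hne (Ideal.pow_le_self (by omega) h))
      (fun s hs => (hTbar s).mp hs) x
    rwa [relIndex_maximalIdeal_pow hjv.le, ← hq.trans Nat.card_eq_fintype_card.symm] at this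
  refine Ideal.pow_le_pow_right ?_ (p.prod_mem_pow_sum_card_filter (S \ Tbar) (x - ·)
    (s := Ico 1 v) (by simp))
  calc ∑ i ∈ Ico 1 v, (q ^ i - 1) = ∑ j ∈ Ico 1 v, (q ^ (v - j) - 1) := by
        rw [sum_Ico_reflect (fun i => q ^ i - 1) 1 (Nat.le_succ v)]; simp
    _ ≤ ∑ j ∈ Ico 1 v, #{y ∈ S \ Tbar | x - y ∈ p ^ j} := sum_le_sum hcount

theorem stmt6 (R : Type*) [CommRing R] [IsDomain R] [IsDiscreteValuationRing R]
    [DecidableEq R] [Fintype (ResidueField R)] (q : ℕ) (hq : q = Fintype.card (ResidueField R))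
    (v : ℕ) (hv : 1 ≤ v)
    (S : Finset R)
    (hS : ∀ x : R, ∃! s : R, s ∈ S ∧ x - s ∈ (maximalIdeal R) ^ v)
    (T : Finset R) (hT : T.Nonempty)
    (hTF : ∀ x ∈ T, ∀ y ∈ T, x ≠ y → x - y ∉ maximalIdeal R)
    (Tbar : Finset R)
    (hTbar : ∀ s : R, s ∈ Tbar ↔ s ∈ S ∧ ∃ t ∈ T, t - s ∈ (maximalIdeal R) ^ v)
    (x : R) :
    (∏ y ∈ S \ Tbar, (x - y)) ∈
      (maximalIdeal R) ^ (∑ i ∈ Finset.Ico 1 v, (q ^ i - 1)) :=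
  stmt6_general R q hq v S hS T hTF Tbar hTbar x
end

section
/- (Generalized Alon-Friedland-Kalai Lemma, equality criterion) With R a DVR with maximal ideal p, residue field of size q, v ≥ 1, S(v) a set of coset representatives of p^v, T ⊂ R finite nonempty with pairwise differences units, T̄ the image of T in S(v), P(x,v,T) = Π_{y ∈ S(v)\T̄}(x-y), and c(v) = Σ_{i=1}^{v-1}(q^i-1): for any x ∈ R, ord_p P(x,v,T) = c(v) if and only if there exists t ∈ T with ord_p(x - t) ≥ v. -/
/-!
Let `s ∈ S` be the representative of `x`. For `y ∈ S \ {s}` the order of `x - y` is below `v`,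
so it counts the `i ∈ [1, v)` with `x ≡ y mod 𝔭^i`; exchanging the two sums, and using that
exactly `q^(v-i)` elements of `S` are congruent to `x` mod `𝔭^i`, the product of the `x - y` over
`S \ {s}` has order `∑ (q^(v-i) - 1) = c(v)`. Since the elements of `T` are pairwise incongruent
mod `𝔭`, at most one `y ∈ T̄` is congruent to `x` mod `𝔭`. If `x ≡ t mod 𝔭^v` for some `t ∈ T`,
then `s ∈ T̄` and the other factors removed from the product are units, so `ord P = c(v)`.
Otherwise `s ∉ T̄`: `P` keeps the factor `x - s` of order `≥ v`, while the removed factors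
contribute order `< v` in total, so `ord P > c(v)`.
-/

open IsLocalRing Finset
open IsDiscreteValuationRing
  (addVal addVal_mul addVal_le_iff_dvd addVal_eq_zero_iff exists_irreducible)

def IsCompleteResidueSystem {R : Type*} [CommRing R] (S : Finset R) (J : Ideal R) : Prop :=
  ∀ x : R, ∃! s : R, s ∈ S ∧ x - s ∈ J

namespace IsCompleteResidueSystem

variable {R : Type*} [CommRing R] {S : Finset R} {J : Ideal R}

theorem eq_of_sub_mem (hS : IsCompleteResidueSystem S J) {x y₁ y₂ : R} (h₁ : y₁ ∈ S)
    (h₂ : y₂ ∈ S) (hx₁ : x - y₁ ∈ J) (hx₂ : x - y₂ ∈ J) : y₁ = y₂ :=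
  (hS x).unique ⟨h₁, hx₁⟩ ⟨h₂, hx₂⟩

open Classical in
theorem card_filter_sub_mem_mul_card_quotient (hS : IsCompleteResidueSystem S J) {I : Ideal R}
    (hJI : J ≤ I) (x : R) : #{y ∈ S | x - y ∈ I} * Nat.card (R ⧸ I) = Nat.card (R ⧸ J) := by
  rw [← Submodule.card_quotient_mul_card_quotient I J hJI, ← Nat.card_eq_finsetCard]
  congr 1
  -- `y ↦ x - y mod J` maps these `y` bijectively onto `I / J`.
  refine Nat.card_congr (Equiv.ofBijective
    (fun y => ⟨J.mkQ (x - y.1), Submodule.mem_map_of_mem (mem_filter.mp y.2).2⟩) ⟨?_, ?_⟩)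
  · rintro ⟨y₁, hy₁⟩ ⟨y₂, hy₂⟩ h
    have h' : y₂ - y₁ ∈ J := by
      simpa using (Submodule.Quotient.eq J).mp (congrArg Subtype.val h)
    exact Subtype.ext (hS.eq_of_sub_mem (x := y₂) (mem_filter.mp hy₁).1 (mem_filter.mp hy₂).1 h'
      (by simp))
  · rintro ⟨w, hw⟩
    obtain ⟨u, huI, rfl⟩ := Submodule.mem_map.mp hw
    obtain ⟨y, ⟨hyS, hy⟩, -⟩ := hS (x - u)
    have hxy : x - y = u + (x - u - y) := by ring
    refine ⟨⟨y, mem_filter.mpr ⟨hyS, hxy ▸ add_mem huI (hJI hy)⟩⟩, Subtype.ext ?_⟩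
    show J.mkQ (x - y) = J.mkQ u
    rw [Submodule.mkQ_apply, Submodule.mkQ_apply, Submodule.Quotient.eq]
    rwa [show x - y - u = x - u - y by ring]

end IsCompleteResidueSystem

theorem exists_sub_mem_iff_of_sub_mem {R : Type*} [CommRing R] {J : Ideal R} {T : Finset R}
    {x s : R} (hxs : x - s ∈ J) : (∃ t ∈ T, x - t ∈ J) ↔ ∃ t ∈ T, t - s ∈ J := by
  refine exists_congr fun t => and_congr_right fun _ => ⟨fun hxt => ?_, fun hts => ?_⟩
  · simpa using J.sub_mem hxs hxt
  · simpa using J.sub_mem hxs hts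

theorem IsCompleteResidueSystem.eq_of_sub_mem_maximalIdeal {R : Type*} [CommRing R]
    [IsLocalRing R] {S T Tbar : Finset R} {v : ℕ} (hv : v ≠ 0)
    (hS : IsCompleteResidueSystem S (maximalIdeal R ^ v))
    (hT : ∀ x ∈ T, ∀ y ∈ T, x ≠ y → IsUnit (x - y))
    (hTbar : ∀ s ∈ Tbar, s ∈ S ∧ ∃ t ∈ T, t - s ∈ maximalIdeal R ^ v) {x y y' : R}
    (hy : y ∈ Tbar) (hy' : y' ∈ Tbar) (hxy : x - y ∈ maximalIdeal R)
    (hxy' : x - y' ∈ maximalIdeal R) : y = y' := by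
  obtain ⟨hyS, t, ht, hty⟩ := hTbar y hy
  obtain ⟨hy'S, t', ht', hty'⟩ := hTbar y' hy'
  by_cases htt : t = t'
  · subst htt
    exact hS.eq_of_sub_mem hyS hy'S hty hty'
  · have hpow := Ideal.pow_le_self (I := maximalIdeal R) hv
    have htt' : t - t' = (t - y) - (x - y) + (x - y') - (t' - y') := by ring
    have hmem : t - t' ∈ maximalIdeal R := htt' ▸
      sub_mem (add_mem (sub_mem (hpow hty) hxy) hxy') (hpow hty')
    exact ((mem_maximalIdeal _).mp hmem (hT t ht t' ht' htt)).elim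

section DVR

variable {R : Type*} [CommRing R] [IsDomain R] [IsDiscreteValuationRing R]

theorem mem_maximalIdeal_pow_iff_le_addVal {z : R} {n : ℕ} :
    z ∈ maximalIdeal R ^ n ↔ (n : ℕ∞) ≤ addVal R z := by
  obtain ⟨ϖ, hϖ⟩ := exists_irreducible R
  rw [hϖ.maximalIdeal_eq, Ideal.span_singleton_pow, Ideal.mem_span_singleton,
    ← addVal_le_iff_dvd, hϖ.addVal_pow]

theorem mem_maximalIdeal_pow_and_notMem_succ_iff {z : R} {n : ℕ} :
    (z ∈ maximalIdeal R ^ n ∧ z ∉ maximalIdeal R ^ (n + 1)) ↔ addVal R z = n := by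
  rw [mem_maximalIdeal_pow_iff_le_addVal, mem_maximalIdeal_pow_iff_le_addVal, not_le,
    Nat.cast_add_one, ENat.lt_add_one_iff (ENat.natCast_ne_top n), and_comm, ← le_antisymm_iff]

theorem addVal_prod {ι : Type*} (F : Finset ι) (f : ι → R) :
    addVal R (∏ i ∈ F, f i) = ∑ i ∈ F, addVal R (f i) := by
  classical
  induction F using Finset.induction_on with
  | empty => simp
  | insert a F ha ih => rw [prod_insert ha, sum_insert ha, addVal_mul, ih]

theorem card_quotient_maximalIdeal_pow (n : ℕ) :
    Nat.card (R ⧸ maximalIdeal R ^ n) = Nat.card (ResidueField R) ^ n := by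
  rw [← Submodule.cardQuot_apply, cardQuot_pow_of_prime (IsDiscreteValuationRing.not_a_field R),
    Submodule.cardQuot_apply]
  rfl

open Classical in
theorem addVal_eq_card_filter {z : R} {v : ℕ} (hz : z ∉ maximalIdeal R ^ v) :
    addVal R z = #{i ∈ Ico 1 v | z ∈ maximalIdeal R ^ i} := by
  rw [mem_maximalIdeal_pow_iff_le_addVal, not_le] at hz
  obtain ⟨n, hn⟩ := ENat.ne_top_iff_exists.mp hz.ne_top
  rw [← hn, Nat.cast_lt] at hz
  have : {i ∈ Ico 1 v | z ∈ maximalIdeal R ^ i} = Ico 1 (n + 1) := by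
    ext i
    simp only [mem_filter, mem_Ico, mem_maximalIdeal_pow_iff_le_addVal, ← hn, Nat.cast_le]
    omega
  rw [← hn, this, Nat.card_Ico, add_tsub_cancel_right]

open Classical in
theorem IsCompleteResidueSystem.card_filter_sub_mem_maximalIdeal_pow [Finite (ResidueField R)]
    {S : Finset R} {v i : ℕ} (hS : IsCompleteResidueSystem S (maximalIdeal R ^ v)) (hi : i ≤ v)
    (x : R) : #{y ∈ S | x - y ∈ maximalIdeal R ^ i} = Nat.card (ResidueField R) ^ (v - i) := by
  have h := hS.card_filter_sub_mem_mul_card_quotient (Ideal.pow_le_pow_right hi) x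
  rw [card_quotient_maximalIdeal_pow, card_quotient_maximalIdeal_pow,
    ← pow_sub_mul_pow _ hi] at h
  exact Nat.eq_of_mul_eq_mul_right (pow_pos Nat.card_pos i) h

theorem IsCompleteResidueSystem.addVal_prod_erase [DecidableEq R] [Finite (ResidueField R)]
    {S : Finset R} {v : ℕ} (hS : IsCompleteResidueSystem S (maximalIdeal R ^ v)) {x s : R}
    (hs : s ∈ S) (hxs : x - s ∈ maximalIdeal R ^ v) :
    addVal R (∏ y ∈ S.erase s, (x - y)) =
      ((∑ i ∈ Ico 1 v, (Nat.card (ResidueField R) ^ i - 1) : ℕ) : ℕ∞) := by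
  classical
  set q := Nat.card (ResidueField R)
  have hval : ∀ y ∈ S.erase s, addVal R (x - y) = #{i ∈ Ico 1 v | x - y ∈ maximalIdeal R ^ i} :=
    fun y hy => addVal_eq_card_filter fun hxy =>
      ne_of_mem_erase hy (hS.eq_of_sub_mem (mem_of_mem_erase hy) hs hxy hxs)
  have hfiber : ∀ i ∈ Ico 1 v,
      #{y ∈ S.erase s | x - y ∈ maximalIdeal R ^ i} = q ^ (v - i) - 1 := by
    intro i hi
    have hiv : i ≤ v := (mem_Ico.mp hi).2.le
    have hs' : s ∈ {y ∈ S | x - y ∈ maximalIdeal R ^ i} :=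
      mem_filter.mpr ⟨hs, Ideal.pow_le_pow_right hiv hxs⟩
    rw [filter_erase, card_erase_of_mem hs', hS.card_filter_sub_mem_maximalIdeal_pow hiv]
  rw [addVal_prod, sum_congr rfl hval, ← Nat.cast_sum, Nat.cast_inj]
  calc ∑ y ∈ S.erase s, #{i ∈ Ico 1 v | x - y ∈ maximalIdeal R ^ i}
      = ∑ i ∈ Ico 1 v, #{y ∈ S.erase s | x - y ∈ maximalIdeal R ^ i} := by
        simp only [card_filter]
        exact sum_comm
    _ = ∑ i ∈ Ico 1 v, (q ^ (v - i) - 1) := sum_congr rfl hfiber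
    _ = ∑ i ∈ Ico 1 v, (q ^ i - 1) := by
        rw [sum_Ico_reflect (fun i => q ^ i - 1) 1 (Nat.le_succ v), add_tsub_cancel_left,
          add_tsub_cancel_right]

theorem addVal_prod_eq_zero {ι : Type*} {F : Finset ι} {f : ι → R}
    (hF : ∀ i ∈ F, f i ∉ maximalIdeal R) : addVal R (∏ i ∈ F, f i) = 0 := by
  rw [addVal_prod]
  refine sum_eq_zero fun i hi => addVal_eq_zero_iff.mpr ?_
  simpa only [mem_maximalIdeal, mem_nonunits_iff, not_not] using hF i hi

theorem addVal_prod_lt {ι : Type*} {F : Finset ι} {f : ι → R} {n : ℕ∞} (hn : 0 < n)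
    (hF : ∀ i ∈ F, ∀ j ∈ F, f i ∈ maximalIdeal R → f j ∈ maximalIdeal R → i = j)
    (hlt : ∀ i ∈ F, addVal R (f i) < n) : addVal R (∏ i ∈ F, f i) < n := by
  classical
  by_cases h : ∃ i ∈ F, f i ∈ maximalIdeal R
  · obtain ⟨i, hi, hfi⟩ := h
    have hrest : ∀ j ∈ F.erase i, f j ∉ maximalIdeal R := fun j hj hfj =>
      ne_of_mem_erase hj (hF j (mem_of_mem_erase hj) i hi hfj hfi)
    rw [← mul_prod_erase F f hi, addVal_mul, addVal_prod_eq_zero hrest, add_zero]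
    exact hlt i hi
  · push Not at h
    rwa [addVal_prod_eq_zero h]

theorem addVal_prod_sdiff_eq_of_mem {ι : Type*} [DecidableEq ι] {S F : Finset ι} {s : ι}
    {f : ι → R} (hFS : F ⊆ S) (hsF : s ∈ F) (hF : ∀ i ∈ F.erase s, f i ∉ maximalIdeal R) :
    addVal R (∏ i ∈ S \ F, f i) = addVal R (∏ i ∈ S.erase s, f i) := by
  rw [← prod_sdiff (erase_subset_erase s hFS), addVal_mul, addVal_prod_eq_zero hF, add_zero,
    ← erase_sdiff_distrib, erase_eq_of_notMem fun h => (mem_sdiff.mp h).2 hsF]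

theorem addVal_prod_erase_add_one_le {ι : Type*} [DecidableEq ι] {S F : Finset ι} {s : ι}
    {f : ι → R} {n : ℕ∞} (hFS : F ⊆ S) (hs : s ∈ S) (hsF : s ∉ F) (hn : 0 < n)
    (hF : ∀ i ∈ F, ∀ j ∈ F, f i ∈ maximalIdeal R → f j ∈ maximalIdeal R → i = j)
    (hlt : ∀ i ∈ F, addVal R (f i) < n) (hfs : n ≤ addVal R (f s)) :
    addVal R (∏ i ∈ S.erase s, f i) + 1 ≤ addVal R (∏ i ∈ S \ F, f i) := by
  have hFs : F ⊆ S.erase s := fun i hi => mem_erase.mpr ⟨fun h => hsF (h ▸ hi), hFS hi⟩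
  rw [← prod_sdiff hFs, ← mul_prod_erase (S \ F) f (mem_sdiff.mpr ⟨hs, hsF⟩), erase_sdiff_comm,
    addVal_mul, addVal_mul, add_assoc, add_comm (addVal R (f s))]
  gcongr
  exact (Order.add_one_le_of_lt (addVal_prod_lt hn hF hlt)).trans hfs

end DVR

theorem stmt7_general (R : Type*) [CommRing R] [IsDomain R] [IsDiscreteValuationRing R]
    [DecidableEq R] [Fintype (ResidueField R)]
    (q : ℕ) (hq : q = Fintype.card (ResidueField R))
    (v : ℕ) (hv : 1 ≤ v)
    (S : Finset R)
    (hS : ∀ x : R, ∃! s : R, s ∈ S ∧ x - s ∈ (maximalIdeal R) ^ v)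
    (T : Finset R)
    (hTF : ∀ x ∈ T, ∀ y ∈ T, x ≠ y → IsUnit (x - y))
    (Tbar : Finset R)
    (hTbar : ∀ s : R, s ∈ Tbar ↔ s ∈ S ∧ ∃ t ∈ T, t - s ∈ (maximalIdeal R) ^ v)
    (x : R) (c : ℕ) (hc : c = ∑ i ∈ Finset.Ico 1 v, (q ^ i - 1)) :
    ((∏ y ∈ S \ Tbar, (x - y)) ∈ (maximalIdeal R) ^ c ∧
        (∏ y ∈ S \ Tbar, (x - y)) ∉ (maximalIdeal R) ^ (c + 1)) ↔
      ∃ t ∈ T, x - t ∈ (maximalIdeal R) ^ v := by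
  have hS' : IsCompleteResidueSystem S (maximalIdeal R ^ v) := hS
  have hv0 : v ≠ 0 := Nat.one_le_iff_ne_zero.mp hv
  obtain ⟨s, ⟨hsS, hxs⟩, -⟩ := hS x
  have hTbarS : Tbar ⊆ S := fun y hy => ((hTbar y).mp hy).1
  have hTbar_sub : ∀ y ∈ Tbar, ∀ y' ∈ Tbar,
      x - y ∈ maximalIdeal R → x - y' ∈ maximalIdeal R → y = y' := fun y hy y' hy' =>
    hS'.eq_of_sub_mem_maximalIdeal hv0 hTF (fun s => (hTbar s).mp) hy hy'
  have hprod : addVal R (∏ y ∈ S.erase s, (x - y)) = c := by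
    rw [hS'.addVal_prod_erase hsS hxs, hc, hq, Nat.card_eq_fintype_card]
  rw [mem_maximalIdeal_pow_and_notMem_succ_iff, exists_sub_mem_iff_of_sub_mem hxs,
    ← (hTbar s).trans (and_iff_right hsS)]
  refine ⟨fun hP => ?_, fun hs => ?_⟩
  · by_contra hs
    have hlt : ∀ y ∈ Tbar, addVal R (x - y) < v := fun y hy => by
      rw [← not_le, ← mem_maximalIdeal_pow_iff_le_addVal]
      exact fun hxy => hs (hS'.eq_of_sub_mem (hTbarS hy) hsS hxy hxs ▸ hy)
    have hle := addVal_prod_erase_add_one_le hTbarS hsS hs (by exact_mod_cast hv) hTbar_sub hlt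
      (mem_maximalIdeal_pow_iff_le_addVal.mp hxs)
    rw [hprod, hP] at hle
    exact Nat.not_succ_le_self c (by exact_mod_cast hle)
  · have hunit : ∀ y ∈ Tbar.erase s, x - y ∉ maximalIdeal R := fun y hy hxy =>
      ne_of_mem_erase hy (hTbar_sub y (mem_of_mem_erase hy) s hs hxy (Ideal.pow_le_self hv0 hxs))
    rw [addVal_prod_sdiff_eq_of_mem hTbarS hs hunit, hprod]

theorem stmt7 (R : Type*) [CommRing R] [IsDomain R] [IsDiscreteValuationRing R]
    [DecidableEq R] [Fintype (ResidueField R)]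
    (q : ℕ) (hq : q = Fintype.card (ResidueField R))
    (v : ℕ) (hv : 1 ≤ v)
    (S : Finset R)
    (hS : ∀ x : R, ∃! s : R, s ∈ S ∧ x - s ∈ (maximalIdeal R) ^ v)
    (T : Finset R) (hT : T.Nonempty)
    (hTF : ∀ x ∈ T, ∀ y ∈ T, x ≠ y → IsUnit (x - y))
    (Tbar : Finset R)
    (hTbar : ∀ s : R, s ∈ Tbar ↔ s ∈ S ∧ ∃ t ∈ T, t - s ∈ (maximalIdeal R) ^ v)
    (x : R) (c : ℕ) (hc : c = ∑ i ∈ Finset.Ico 1 v, (q ^ i - 1)) :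
    ((∏ y ∈ S \ Tbar, (x - y)) ∈ (maximalIdeal R) ^ c ∧
        (∏ y ∈ S \ Tbar, (x - y)) ∉ (maximalIdeal R) ^ (c + 1)) ↔
      ∃ t ∈ T, x - t ∈ (maximalIdeal R) ^ v :=
  stmt7_general R q hq v hv S hS T hTF Tbar hTbar x c hc
end

section
/- (Schauz's Combinatorial Nullstellensatz criterion) Let R be a commutative ring and A_1,...,A_n ⊂ R nonempty finite sets. The following are equivalent: (i) each A_i satisfies Condition (D) (pairwise differences of distinct elements are non-zero-divisors); (ii) for all f ∈ R[t_1,...,t_n] with deg_{t_i} f < #A_i for all i, if f vanishes at every point of A_1 × ... × A_n then f = 0. -/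
/-!
A polynomial in one variable vanishing on a finite set `S` whose pairwise differences are
non-zero-divisors is divisible by the monic `∏ a ∈ S, (X - a)`, so it is zero if its degree is
below `#S`. The multivariate statement follows by induction on the number of variables, viewing
`f` as a polynomial in `t₀` over the remaining ones. Conversely, if `c * (x - y) = 0` with
`c ≠ 0` and `x ≠ y` in `A i`, then `c * ∏ a ∈ A i \ {x}, (tᵢ - a)` is a nonzero polynomial of
degree `#(A i) - 1` in `tᵢ` alone that vanishes on the whole grid.
-/

open MvPolynomial

namespace Polynomial

open Finset
open scoped nonZeroDivisors

variable {R : Type*}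

section CommSemiring

variable [CommSemiring R] {σ : Type*}

theorem toMvPolynomial_eq_sum_monomial (p : R[X]) (i : σ) :
    p.toMvPolynomial i =
      ∑ k ∈ p.support, MvPolynomial.monomial (Finsupp.single i k) (p.coeff k) := by
  conv_lhs => rw [p.as_sum_support]
  simp [toMvPolynomial, MvPolynomial.C_mul_X_pow_eq_monomial]

theorem degreeOf_toMvPolynomial_le (p : R[X]) (i j : σ) :
    (p.toMvPolynomial i).degreeOf j ≤ Finsupp.single i p.natDegree j := by
  classical
  rw [p.toMvPolynomial_eq_sum_monomial, degreeOf_le_iff]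
  intro m hm
  obtain ⟨k, hk, hm⟩ := mem_biUnion.mp (support_sum hm)
  rw [mem_singleton.mp (MvPolynomial.support_monomial_subset hm)]
  exact Finsupp.single_mono (le_natDegree_of_mem_supp k hk) j

end CommSemiring

variable [CommRing R]

theorem prod_X_sub_C_dvd_of_eval_eq_zero {S : Finset R}
    (hS : (S : Set R).Pairwise fun x y => x - y ∈ R⁰) {p : R[X]}
    (hp : ∀ x ∈ S, p.eval x = 0) : ∏ x ∈ S, (X - C x) ∣ p := by
  classical
  induction S using Finset.induction_on generalizing p with
  | empty => simp
  | insert a s ha ih =>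
    rw [coe_insert, Set.pairwise_insert] at hS
    obtain ⟨q, rfl⟩ := ih hS.1 fun x hx => hp x (mem_insert_of_mem hx)
    have hprod : ∏ x ∈ s, (a - x) ∈ R⁰ :=
      prod_mem fun x hx => (hS.2 x hx (ne_of_mem_of_not_mem hx ha).symm).1
    have hq : q.IsRoot a := by
      have := hp a (mem_insert_self a s)
      rwa [eval_mul, eval_prod, mul_left_mem_nonZeroDivisors_eq_zero_iff (by simpa using hprod)]
        at this
    obtain ⟨r, rfl⟩ := dvd_iff_isRoot.mpr hq
    rw [prod_insert ha]
    exact ⟨r, by ring⟩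

theorem eq_zero_of_natDegree_lt_card_of_eval_eq_zero_of_pairwise {S : Finset R}
    (hS : (S : Set R).Pairwise fun x y => x - y ∈ R⁰) {p : R[X]} (hdeg : p.natDegree < #S)
    (hp : ∀ x ∈ S, p.eval x = 0) : p = 0 := by
  nontriviality R
  by_contra hp0
  refine (monic_prod_of_monic S _ fun x _ => monic_X_sub_C x).not_dvd_of_natDegree_lt hp0 ?_
    (prod_X_sub_C_dvd_of_eval_eq_zero hS hp)
  simpa using hdeg

theorem exists_ne_zero_natDegree_lt_card_of_not_pairwise {S : Finset R}
    (hS : ¬(S : Set R).Pairwise fun x y => x - y ∈ R⁰) :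
    ∃ p : R[X], p ≠ 0 ∧ p.natDegree < #S ∧ ∀ x ∈ S, p.eval x = 0 := by
  classical
  simp only [Set.Pairwise, mem_coe, not_forall] at hS
  obtain ⟨x, hx, y, hy, hxy, hxy'⟩ := hS
  obtain ⟨c, hc, hc0⟩ := notMem_nonZeroDivisors_iff_right.mp hxy'
  have : Nontrivial R := ⟨⟨c, 0, hc0⟩⟩
  set q := ∏ a ∈ S.erase x, (X - C a)
  have hq : q.Monic := monic_prod_of_monic _ _ fun a _ => monic_X_sub_C a
  refine ⟨C c * q, fun h => hc0 ?_, ?_, fun z hz => ?_⟩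
  · simpa [coeff_C_mul, hq.coeff_natDegree] using congr(($h).coeff q.natDegree)
  · calc (C c * q).natDegree ≤ q.natDegree := natDegree_C_mul_le c q
      _ = #S - 1 := by simp [q, card_erase_of_mem hx]
      _ < #S := Nat.sub_lt (card_pos.mpr ⟨x, hx⟩) one_pos
  · rw [eval_mul, eval_C]
    rcases eq_or_ne z x with rfl | hzx
    · rw [eval_prod, ← mul_prod_erase _ _ (mem_erase.mpr ⟨hxy.symm, hy⟩), ← mul_assoc]
      simp [hc]
    · rw [eval_prod, prod_eq_zero (mem_erase.mpr ⟨hzx, hz⟩) (by simp), mul_zero]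

end Polynomial

namespace MvPolynomial

open Finset
open scoped nonZeroDivisors

variable {R : Type*} [CommRing R]

theorem eq_zero_of_eval_zero_at_prod_finset_of_pairwise {n : ℕ} {S : Fin n → Finset R}
    (hS : ∀ i, (S i : Set R).Pairwise fun x y => x - y ∈ R⁰) {f : MvPolynomial (Fin n) R}
    (hdeg : ∀ i, f.degreeOf i < #(S i))
    (hf : ∀ x : Fin n → R, (∀ i, x i ∈ S i) → eval x f = 0) : f = 0 := by
  induction n with
  | zero =>
    obtain ⟨r, rfl⟩ := C_surjective (Fin 0) f
    simpa using hf finZeroElim finZeroElim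
  | succ n ih =>
    apply (finSuccEquiv R n).injective
    ext k : 1
    rw [map_zero, Polynomial.coeff_zero]
    refine ih (fun i => hS i.succ)
      (fun i => (degreeOf_coeff_finSuccEquiv f i k).trans_lt (hdeg i.succ)) fun x hx => ?_
    have hmap : (finSuccEquiv R n f).map (eval x) = 0 := by
      refine Polynomial.eq_zero_of_natDegree_lt_card_of_eval_eq_zero_of_pairwise (hS 0) ?_
        fun y hy => ?_
      · calc ((finSuccEquiv R n f).map (eval x)).natDegree ≤ (finSuccEquiv R n f).natDegree :=
              Polynomial.natDegree_map_le
          _ = f.degreeOf 0 := natDegree_finSuccEquiv f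
          _ < #(S 0) := hdeg 0
      · rw [← eval_eq_eval_mv_eval']
        exact hf _ (Fin.cases hy hx)
    simpa using congr(($hmap).coeff k)

end MvPolynomial

theorem stmt8 (R : Type*) [CommRing R] (n : ℕ)
    (A : Fin n → Finset R) (hA : ∀ i, (A i).Nonempty) :
    (∀ i, ∀ x ∈ A i, ∀ y ∈ A i, x ≠ y → (x - y) ∈ nonZeroDivisors R) ↔
      (∀ f : MvPolynomial (Fin n) R,
        (∀ i, f.degreeOf i < (A i).card) →
        (∀ a : Fin n → R, (∀ i, a i ∈ A i) → eval a f = 0) → f = 0) := by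
  refine ⟨fun hD f => eq_zero_of_eval_zero_at_prod_finset_of_pairwise hD, fun H i => ?_⟩
  by_contra hD
  obtain ⟨p, hp0, hdeg, hp⟩ := Polynomial.exists_ne_zero_natDegree_lt_card_of_not_pairwise hD
  refine hp0 (Polynomial.toMvPolynomial_injective i ?_)
  rw [map_zero]
  refine H _ (fun j => (p.degreeOf_toMvPolynomial_le i j).trans_lt ?_) fun a ha => ?_
  · rcases eq_or_ne i j with rfl | hij
    · rwa [Finsupp.single_eq_same]
    · rw [Finsupp.single_eq_of_ne hij.symm]
      exact (hA j).card_pos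
  · rw [eval_toMvPolynomial]
    exact hp _ (ha i)
end

section
/- (Plus-minus Davenport constant of cyclic groups) For every integer n ≥ 2, D_±(Z/nZ) = ⌊log_2 n⌋ + 1, i.e., ⌊log_2 n⌋ + 1 is the least m such that every sequence g_1,...,g_m in Z/nZ admits coefficients a_i ∈ {-1,0,1}, not all zero, with Σ a_i g_i = 0. -/
lemma uniq18 : ∀ (m : ℕ) (a : Fin m → ℤ),
    (∀ i, a i = -1 ∨ a i = 0 ∨ a i = 1) → (∑ i, a i * 2 ^ (i : ℕ)) = 0 →
    ∀ i, a i = 0 := by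
  intro m
  induction m with
  | zero => intro a _ _ i; exact absurd i.2 (by omega)
  | succ m ih =>
    intro a ha hsum i
    rw [Fin.sum_univ_succ] at hsum
    simp only [Fin.val_zero, pow_zero, mul_one, Fin.val_succ] at hsum
    have hrw : ∑ i : Fin m, a i.succ * 2 ^ ((i : ℕ) + 1)
        = 2 * ∑ i : Fin m, a i.succ * 2 ^ (i : ℕ) := by
      rw [Finset.mul_sum]
      exact Finset.sum_congr rfl (fun i _ => by ring)
    rw [hrw] at hsum
    have h0 := ha 0
    have ha0 : a 0 = 0 ∧ (∑ i : Fin m, a i.succ * 2 ^ (i : ℕ)) = 0 := by omega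
    have hrest := ih (fun i => a i.succ) (fun i => ha i.succ) ha0.2
    refine Fin.cases ha0.1 (fun j => hrest j) i

lemma geom18 (m : ℕ) : ∑ i ∈ Finset.range m, (2 : ℤ) ^ i = 2 ^ m - 1 := by
  induction m with
  | zero => simp
  | succ p ihp => rw [Finset.sum_range_succ, ihp]; ring

theorem stmt18 (n : ℕ) (hn : 2 ≤ n) :
    IsLeast {m : ℕ | ∀ g : Fin m → ZMod n,
      ∃ a : Fin m → ℤ, (∀ i, a i = -1 ∨ a i = 0 ∨ a i = 1) ∧ a ≠ 0 ∧
        ∑ i, a i • g i = 0}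
      (Nat.log 2 n + 1) := by
  haveI : NeZero n := ⟨by omega⟩
  set k := Nat.log 2 n with hk
  constructor
  · -- membership: every sequence of length k+1 works
    intro g
    have hcard : Fintype.card (ZMod n) < Fintype.card (Finset (Fin (k + 1))) := by
      rw [Fintype.card_finset, ZMod.card, Fintype.card_fin]
      exact Nat.lt_pow_succ_log_self (by norm_num) n
    obtain ⟨S, T, hST, hfeq⟩ :=
      Fintype.exists_ne_map_eq_of_card_lt (fun S : Finset (Fin (k + 1)) => ∑ i ∈ S, g i) hcard
    refine ⟨fun i => (if i ∈ S then (1 : ℤ) else 0) - (if i ∈ T then 1 else 0), ?_, ?_, ?_⟩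
    · intro i; dsimp only; split_ifs <;> norm_num
    · intro h
      apply hST
      ext i
      have := congrFun h i
      simp only [Pi.zero_apply] at this
      constructor <;> intro hi <;> by_contra hi' <;> simp [hi, hi'] at this
    · have hs : ∀ i : Fin (k + 1),
          ((if i ∈ S then (1 : ℤ) else 0) - (if i ∈ T then 1 else 0)) • g i
          = (if i ∈ S then g i else 0) - (if i ∈ T then g i else 0) := by
        intro i; split_ifs <;> simp
      simp only [hs, Finset.sum_sub_distrib]
      rw [Finset.sum_ite_mem, Finset.sum_ite_mem, Finset.univ_inter, Finset.univ_inter,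
        hfeq, sub_self]
  · -- lower bound
    intro m hm
    by_contra hlt
    push_neg at hlt
    have hmk : m ≤ k := by omega
    obtain ⟨a, ha, hane, hsum⟩ := hm (fun i => (2 : ZMod n) ^ (i : ℕ))
    -- consider the integer sum
    set s : ℤ := ∑ i, a i * 2 ^ (i : ℕ) with hs
    have hcast : ((s : ℤ) : ZMod n) = 0 := by
      push_cast [hs]
      rw [← hsum]
      exact Finset.sum_congr rfl (fun i _ => by simp [zsmul_eq_mul])
    have hdvd : (n : ℤ) ∣ s := by
      rwa [ZMod.intCast_zmod_eq_zero_iff_dvd] at hcast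
    have habs : |s| < n := by
      calc |s| ≤ ∑ i : Fin m, |a i * 2 ^ (i : ℕ)| := Finset.abs_sum_le_sum_abs _ _
        _ ≤ ∑ i : Fin m, 2 ^ (i : ℕ) := by
            refine Finset.sum_le_sum (fun i _ => ?_)
            rw [abs_mul]
            have : |a i| ≤ 1 := by rcases ha i with h | h | h <;> simp [h]
            calc |a i| * |(2 : ℤ) ^ (i : ℕ)| ≤ 1 * |(2 : ℤ) ^ (i : ℕ)| := by
                  exact mul_le_mul_of_nonneg_right this (abs_nonneg _)
              _ = 2 ^ (i : ℕ) := by rw [one_mul, abs_pow, abs_two]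
        _ = ∑ i ∈ Finset.range m, (2 : ℤ) ^ i := (Fin.sum_univ_eq_sum_range _ m)
        _ = 2 ^ m - 1 := geom18 m
        _ < 2 ^ k := by
            have : (2 : ℤ) ^ m ≤ 2 ^ k := pow_le_pow_right₀ (by norm_num) hmk
            omega
        _ ≤ n := by
            exact_mod_cast Nat.pow_log_le_self 2 (by omega)
    have hs0 : s = 0 := Int.eq_zero_of_abs_lt_dvd hdvd habs
    rw [hs] at hs0
    exact hane (funext (uniq18 m a ha hs0))
end
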